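/- For the symbolic fixpoint over a symbolic DFA: defining w₀(Z) = ¬f(Z) and w_{i+1}(Z) = w_i(Z) ∧ ∀X ∃Y. w_i(η(X,Y,Z)), an assignment Z satisfies w_i if and only if the state represented by Z is in Win_i(A^s), where A^s is the DSA induced by the symbolic DFA (states are assignments not satisfying f) and Win_i is the i-th iterate of the safety-game fixpoint. -/
import Mathlib


/- Symbolic DFA data: `I = 2^X` input assignments, `O = 2^Y` output assignments,
`Z = 2^Z` state assignments, `η : I → O → Z → Z` the symbolic transition
function, and `f : Set Z` the accepting (bad) states. -/

/-- The symbolic fixpoint: `w₀(Z) = ¬f(Z)` and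
`w_{i+1}(Z) = w_i(Z) ∧ ∀X ∃Y. w_i(η(X,Y,Z))`. -/
def symW {I O Z : Type} (η : I → O → Z → Z) (f : Set Z) : ℕ → Set Z
  | 0 => fᶜ
  | i + 1 => symW η f i ∩ {z | ∀ X : I, ∃ Y : O, η X Y z ∈ symW η f i}

/-- Controllable predecessors in the DSA induced by the symbolic DFA: its states
are the assignments not satisfying `f`, and `δ(z, X∪Y) = η(X,Y,z)` is defined
(as a transition of the safety automaton) only between such states. -/
def preS {I O Z : Type} (η : I → O → Z → Z) (f : Set Z) (E : Set Z) : Set Z :=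
  {z | z ∉ f ∧ ∀ X : I, ∃ Y : O, η X Y z ∉ f ∧ η X Y z ∈ E}

/-- The safety-game fixpoint iteration over the induced DSA:
`Win₀ = S = {z | z ∉ f}`, `Win_{i+1} = Win_i ∩ Pre(Win_i)`. -/
def winIterS {I O Z : Type} (η : I → O → Z → Z) (f : Set Z) : ℕ → Set Z
  | 0 => fᶜ
  | i + 1 => winIterS η f i ∩ preS η f (winIterS η f i)

lemma winIterS_not_f {I O Z : Type} (η : I → O → Z → Z) (f : Set Z) (i : ℕ)
    {z : Z} (h : z ∈ winIterS η f i) : z ∉ f := by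
  induction i with
  | zero => exact h
  | succ i ih => exact ih h.1

/-- An assignment `z` satisfies the symbolic fixpoint formula `w_i` iff the
state it represents is in `Win_i` of the safety game over the DSA induced by
the symbolic DFA. -/
theorem symW_eq_winIter {I O Z : Type} (η : I → O → Z → Z) (f : Set Z)
    (i : ℕ) (z : Z) :
    z ∈ symW η f i ↔ z ∈ winIterS η f i := by
  induction i generalizing z with
  | zero => exact Iff.rfl
  | succ i ih =>
    simp only [symW, winIterS, preS, Set.mem_inter_iff, Set.mem_setOf_eq, ih]
    constructor
    · rintro ⟨hz, hX⟩
      refine ⟨hz, winIterS_not_f η f i hz, fun X => ?_⟩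
      obtain ⟨Y, hY⟩ := hX X
      exact ⟨Y, winIterS_not_f η f i hY, hY⟩
    · rintro ⟨hz, -, hX⟩
      exact ⟨hz, fun X => (hX X).imp fun Y h => h.2⟩
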